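/- Let α, β be real numbers and ε ∈ ℝ with ε = 1 or ε = -1, and set b₁ = α/2 + ε - β, b₂ = α/2 - ε, b₃ = α/2 + ε. On ℝ³ with standard basis e₁, e₂, e₃, let the bracket be the bilinear antisymmetric map determined by [e₁,e₂] = -e₂ + (2*ε - β)•e₃, [e₁,e₃] = -β•e₂ + e₃, [e₂,e₃] = α•e₁ (the Lie algebra of G₄), and let ∇ be the bilinear map ℝ³ → ℝ³ → ℝ³ determined on basis vectors by ∇_{e₁}e₁ = 0, ∇_{e₂}e₁ = e₂ + b₂•e₃, ∇_{e₃}e₁ = b₃•e₂ - e₃, ∇_{e₁}e₂ = b₁•e₃, ∇_{e₂}e₂ = -e₁, ∇_{e₃}e₂ = -b₃•e₁, ∇_{e₁}e₃ = b₁•e₂, ∇_{e₂}e₃ = b₂•e₁, ∇_{e₃}e₃ = -e₁. Then for all X, Y, Z ∈ ℝ³, 2*g(∇_X Y, Z) = g([X,Y], Z) - g([Y,Z], X) + g([Z,X], Y), i.e. ∇ satisfies the Koszul formula characterizing the Levi-Civita connection of the left-invariant Lorentzian metric g. -/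

import Mathlib

noncomputable section

/-- The standard basis of `ℝ³`. -/
def e₁ : Fin 3 → ℝ := ![1, 0, 0]
def e₂ : Fin 3 → ℝ := ![0, 1, 0]
def e₃ : Fin 3 → ℝ := ![0, 0, 1]

/-- The Lorentzian inner product with `e₁, e₂, e₃` pseudo-orthonormal, `e₃` timelike. -/
def g (X Y : Fin 3 → ℝ) : ℝ := X 0 * Y 0 + X 1 * Y 1 - X 2 * Y 2

def b₁ (α β ε : ℝ) : ℝ := α/2 + ε - β
def b₂ (α ε : ℝ) : ℝ := α/2 - ε
def b₃ (α ε : ℝ) : ℝ := α/2 + ε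

/-- The bilinear antisymmetric bracket of the Lie algebra of `G₄`:
`[e₁,e₂] = -e₂ + (2ε-β)e₃`, `[e₁,e₃] = -βe₂ + e₃`, `[e₂,e₃] = αe₁`. -/
def bracket (α β ε : ℝ) (X Y : Fin 3 → ℝ) : Fin 3 → ℝ :=
  (X 0 * Y 1 - X 1 * Y 0) • (-e₂ + (2*ε - β) • e₃) +
  (X 0 * Y 2 - X 2 * Y 0) • (-β • e₂ + e₃) +
  (X 1 * Y 2 - X 2 * Y 1) • (α • e₁)

/-- The candidate Levi-Civita connection of `G₄`, extended bilinearly from its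
values on the basis vectors. -/
def nabla (α β ε : ℝ) (X Y : Fin 3 → ℝ) : Fin 3 → ℝ :=
  (X 0 * Y 0) • (0 : Fin 3 → ℝ) +
  (X 0 * Y 1) • (b₁ α β ε • e₃) +
  (X 0 * Y 2) • (b₁ α β ε • e₂) +
  (X 1 * Y 0) • (e₂ + b₂ α ε • e₃) +
  (X 1 * Y 1) • (-e₁) +
  (X 1 * Y 2) • (b₂ α ε • e₁) +
  (X 2 * Y 0) • (b₃ α ε • e₂ - e₃) +
  (X 2 * Y 1) • (-b₃ α ε • e₁) +
  (X 2 * Y 2) • (-e₁)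

theorem bracket_eq_vec (α β ε : ℝ) (X Y : Fin 3 → ℝ) :
    bracket α β ε X Y =
      ![α * (X 1 * Y 2 - X 2 * Y 1),
        -(X 0 * Y 1 - X 1 * Y 0) - β * (X 0 * Y 2 - X 2 * Y 0),
        (2 * ε - β) * (X 0 * Y 1 - X 1 * Y 0) + (X 0 * Y 2 - X 2 * Y 0)] := by
  ext i
  fin_cases i <;>
    simp only [bracket, e₁, e₂, e₃, Pi.add_apply, Pi.neg_apply, Pi.smul_apply, smul_eq_mul,
      Fin.zero_eta, Fin.mk_one, Fin.reduceFinMk, Matrix.cons_val] <;>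
    ring

theorem nabla_eq_vec (α β ε : ℝ) (X Y : Fin 3 → ℝ) :
    nabla α β ε X Y =
      ![b₂ α ε * X 1 * Y 2 - X 1 * Y 1 - b₃ α ε * X 2 * Y 1 - X 2 * Y 2,
        b₁ α β ε * X 0 * Y 2 + X 1 * Y 0 + b₃ α ε * X 2 * Y 0,
        b₁ α β ε * X 0 * Y 1 + b₂ α ε * X 1 * Y 0 - X 2 * Y 0] := by
  ext i
  fin_cases i <;>
    simp only [nabla, e₁, e₂, e₃, Pi.add_apply, Pi.sub_apply, Pi.neg_apply, Pi.smul_apply,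
      Pi.zero_apply, smul_eq_mul, Fin.zero_eta, Fin.mk_one, Fin.reduceFinMk, Matrix.cons_val] <;>
    ring

theorem g_vec (a b c : ℝ) (Y : Fin 3 → ℝ) : g ![a, b, c] Y = a * Y 0 + b * Y 1 - c * Y 2 := rfl

theorem G4_LeviCivita_Koszul_general (α β ε : ℝ) (X Y Z : Fin 3 → ℝ) :
    2 * g (nabla α β ε X Y) Z =
      g (bracket α β ε X Y) Z - g (bracket α β ε Y Z) X + g (bracket α β ε Z X) Y := by
  rw [nabla_eq_vec, bracket_eq_vec, bracket_eq_vec, bracket_eq_vec]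
  simp only [g_vec, b₁, b₂, b₃]
  ring

/-- `∇` satisfies the Koszul formula characterizing the Levi-Civita connection
of the left-invariant Lorentzian metric `g` on `G₄`. -/
theorem G4_LeviCivita_Koszul (α β ε : ℝ) (hε : ε = 1 ∨ ε = -1) (X Y Z : Fin 3 → ℝ) :
    2 * g (nabla α β ε X Y) Z =
      g (bracket α β ε X Y) Z - g (bracket α β ε Y Z) X + g (bracket α β ε Z X) Y :=
  G4_LeviCivita_Koszul_general α β ε X Y Z

end
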